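/- arXiv:1710.10682 — 4 statements merged into one kernel-verified Lean document; each statement's English description precedes it below -/
import Mathlib

section
/- Suppose J₁, …, J_n are transverse Jacobi solutions whose values J₁(t), …, J_n(t) are linearly independent vectors in ℝ^n for every t ∈ (0,a] (i.e., there are no focal points on (0,a]). Let X(t) = Σᵢ fⁱ(t)Jᵢ(t), where the functions fⁱ : [0,a] → ℝ are piecewise smooth and satisfy fⁱ(a) = 0 for all i. Then I(X,X) ≥ 0, with equality if and only if X vanishes identically. -/
open scoped RealInnerProductSpace
open MeasureTheory

/-- A transverse Jacobi solution on `[0, a]`: a `C²` curve `J` (with derivative `J'`)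
satisfying `J'' + R(t) J = 0`, `J(0) ∈ V₀`, and `⟨J'(0), w⟩ = −h(J(0), w)` for all `w ∈ V₀`. -/
structure TransverseJacobi (n : ℕ) (a : ℝ)
    (R : ℝ → EuclideanSpace ℝ (Fin n) →L[ℝ] EuclideanSpace ℝ (Fin n))
    (V₀ : Submodule ℝ (EuclideanSpace ℝ (Fin n)))
    (h : EuclideanSpace ℝ (Fin n) →ₗ[ℝ] EuclideanSpace ℝ (Fin n) →ₗ[ℝ] ℝ) where
  J : ℝ → EuclideanSpace ℝ (Fin n)
  J' : ℝ → EuclideanSpace ℝ (Fin n)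
  hasDeriv : ∀ t ∈ Set.Icc 0 a, HasDerivWithinAt J (J' t) (Set.Icc 0 a) t
  hasDeriv' : ∀ t ∈ Set.Icc 0 a, HasDerivWithinAt J' (-(R t (J t))) (Set.Icc 0 a) t
  init_mem : J 0 ∈ V₀
  init_deriv : ∀ w ∈ V₀, ⟪J' 0, w⟫ = - h (J 0) w

/-- The index form
`I(X, Y) := −h(X(0), Y(0)) + ∫₀ᵃ (⟨X'(t), Y'(t)⟩ − ⟨R(t) X(t), Y(t)⟩) dt`. -/
noncomputable def indexForm (n : ℕ) (a : ℝ)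
    (R : ℝ → EuclideanSpace ℝ (Fin n) →L[ℝ] EuclideanSpace ℝ (Fin n))
    (h : EuclideanSpace ℝ (Fin n) →ₗ[ℝ] EuclideanSpace ℝ (Fin n) →ₗ[ℝ] ℝ)
    (X X' Y Y' : ℝ → EuclideanSpace ℝ (Fin n)) : ℝ :=
  - h (X 0) (Y 0) + ∫ t in (0:ℝ)..a, (⟪X' t, Y' t⟫ - ⟪R t (X t), Y t⟫)

/-!
Write `X = ∑ fⁱ Jᵢ` and split `X' = Y + Z` with `Y = ∑ fⁱ' Jᵢ` and `Z = ∑ fⁱ Jᵢ'`. By the Jacobi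
equation and the symmetry of `R`, the Wronskians `⟨Jᵢ', Jⱼ⟩ - ⟨Jᵢ, Jⱼ'⟩` are constant; the
transversality condition and the symmetry of `h` make them vanish at `0`. This symmetry gives
`⟨X, Z⟩' = ⟨X', X'⟩ - ⟨R X, X⟩ - ‖Y‖²`, so the fundamental theorem of calculus, `X(a) = 0` and
`⟨X(0), Z(0)⟩ = -h(X(0), X(0))` yield `I(X, X) = ∫₀ᵃ ‖Y‖²`. This integral vanishes iff `Y = 0`
almost everywhere, iff (the `Jᵢ(t)` being independent for `t > 0`) every `fⁱ'` vanishes almost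
everywhere, iff every `fⁱ` vanishes (as `fⁱ(a) = 0`), iff `X = 0`.
-/

open Set Filter Topology

section RealFunctions

variable {F : Type*} [NormedAddCommGroup F]

theorem ae_restrict_Ioc_mem_Ioo_diff {a b : ℝ} {T : Set ℝ} (hT : T.Countable) :
    ∀ᵐ t ∂volume.restrict (Ioc a b), t ∈ Ioo a b \ T := by
  rw [Measure.restrict_congr_set Ioo_ae_eq_Ioc.symm]
  filter_upwards [ae_restrict_mem measurableSet_Ioo, ae_restrict_of_ae (hT.ae_notMem volume)]
    with t hIoo hT using ⟨hIoo, hT⟩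

theorem aestronglyMeasurable_of_hasDerivAt_off_countable [NormedSpace ℝ F] [CompleteSpace F]
    {f f' : ℝ → F} {a b : ℝ} {T : Set ℝ} (hT : T.Countable)
    (hd : ∀ t ∈ Ioo a b \ T, HasDerivAt f (f' t) t) :
    AEStronglyMeasurable f' (volume.restrict (Ioc a b)) := by
  refine (aestronglyMeasurable_derivWithin_Ici f _).congr ?_
  filter_upwards [ae_restrict_Ioc_mem_Ioo_diff hT] with t ht
  exact (hd t ht).hasDerivWithinAt.derivWithin (uniqueDiffWithinAt_Ici t)

theorem ae_eq_zero_iff_forall_eq_right_of_hasDerivAt [NormedSpace ℝ F] [CompleteSpace F]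
    {f f' : ℝ → F} {a b : ℝ} {T : Set ℝ} (hT : T.Countable) (hf : ContinuousOn f (Icc a b))
    (hd : ∀ t ∈ Ioo a b \ T, HasDerivAt f (f' t) t) :
    f' =ᵐ[volume.restrict (Ioc a b)] 0 ↔ ∀ t ∈ Icc a b, f t = f b := by
  constructor
  · intro h0 t ht
    have h0t : f' =ᵐ[volume.restrict (Ioc t b)] 0 :=
      ae_restrict_of_ae_restrict_of_subset (Ioc_subset_Ioc_left ht.1) h0
    have hFTC := integral_eq_of_hasDerivAt_off_countable_of_le f f' ht.2 hT
      (hf.mono (Icc_subset_Icc_left ht.1))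
      (fun s hs => hd s ⟨Ioo_subset_Ioo_left ht.1 hs.1, hs.2⟩)
      ((intervalIntegrable_iff_integrableOn_Ioc_of_le ht.2).2
        ((integrable_zero _ _ _).congr h0t.symm))
    rw [intervalIntegral.integral_of_le ht.2, integral_eq_zero_of_ae h0t] at hFTC
    exact (sub_eq_zero.1 hFTC.symm).symm
  · intro hconst
    filter_upwards [ae_restrict_Ioc_mem_Ioo_diff hT] with t ht
    have hloc : f =ᶠ[𝓝 t] fun _ => f b := eventually_of_mem (Ioo_mem_nhds ht.1.1 ht.1.2)
      fun s hs => hconst s (Ioo_subset_Icc_self hs)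
    exact (hd t ht).unique ((hasDerivAt_const t (f b)).congr_of_eventuallyEq hloc)

theorem ContinuousOn.memLp_top_restrict_Ioc {g : ℝ → F} {a b : ℝ}
    (hg : ContinuousOn g (Icc a b)) : MemLp g ⊤ (volume.restrict (Ioc a b)) := by
  obtain ⟨C, hC⟩ := isCompact_Icc.exists_bound_of_continuousOn hg
  refine memLp_top_of_bound ((hg.mono Ioc_subset_Icc_self).aestronglyMeasurable measurableSet_Ioc)
    C ?_
  filter_upwards [ae_restrict_mem measurableSet_Ioc] with t ht using hC t (Ioc_subset_Icc_self ht)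

theorem MeasureTheory.MemLp.intervalIntegrable_norm_sq {g : ℝ → F} {a b : ℝ}
    (hg : MemLp g 2 (volume.restrict (Ioc a b))) (hab : a ≤ b) :
    IntervalIntegrable (fun t => ‖g t‖ ^ 2) volume a b :=
  (intervalIntegrable_iff_integrableOn_Ioc_of_le hab).2
    ((memLp_two_iff_integrable_sq_norm hg.1).1 hg)

end RealFunctions

section Jacobi

variable {ι E : Type*} [Fintype ι] [NormedAddCommGroup E] [InnerProductSpace ℝ E]

theorem inner_deriv_sub_inner_deriv_eq_of_jacobi {R : ℝ → E →L[ℝ] E} {u u' v v' : ℝ → E}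
    {a b : ℝ} (hR : ∀ t ∈ Icc a b, ∀ x y, ⟪R t x, y⟫ = ⟪x, R t y⟫)
    (hu : ∀ t ∈ Icc a b, HasDerivWithinAt u (u' t) (Icc a b) t)
    (hu' : ∀ t ∈ Icc a b, HasDerivWithinAt u' (-R t (u t)) (Icc a b) t)
    (hv : ∀ t ∈ Icc a b, HasDerivWithinAt v (v' t) (Icc a b) t)
    (hv' : ∀ t ∈ Icc a b, HasDerivWithinAt v' (-R t (v t)) (Icc a b) t) :
    ∀ t ∈ Icc a b, ⟪u' t, v t⟫ - ⟪u t, v' t⟫ = ⟪u' a, v a⟫ - ⟪u a, v' a⟫ := by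
  have hW : ∀ t ∈ Icc a b,
      HasDerivWithinAt (fun s => ⟪u' s, v s⟫ - ⟪u s, v' s⟫) 0 (Icc a b) t := by
    intro t ht
    refine (((hu' t ht).inner ℝ (hv t ht)).sub ((hu t ht).inner ℝ (hv' t ht))).congr_deriv ?_
    simp only [inner_neg_left, inner_neg_right, hR t ht]
    ring
  have hconst := (ae_eq_zero_iff_forall_eq_right_of_hasDerivAt (f' := 0) countable_empty
    (fun t ht => (hW t ht).continuousWithinAt)
    (fun t ht => (hW t (Ioo_subset_Icc_self ht.1)).hasDerivAt (Icc_mem_nhds ht.1.1 ht.1.2))).1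
    EventuallyEq.rfl
  intro t ht
  exact (hconst t ht).trans (hconst a (left_mem_Icc.2 (ht.1.trans ht.2))).symm

def lincomb (c : ι → ℝ → ℝ) (v : ι → ℝ → E) (t : ℝ) : E := ∑ i, c i t • v i t

theorem ContinuousOn.lincomb {c : ι → ℝ → ℝ} {v : ι → ℝ → E} {s : Set ℝ}
    (hc : ∀ i, ContinuousOn (c i) s) (hv : ∀ i, ContinuousOn (v i) s) :
    ContinuousOn (lincomb c v) s :=
  continuousOn_finsetSum _ fun i _ => (hc i).smul (hv i)

theorem hasDerivAt_lincomb {c c' : ι → ℝ → ℝ} {v v' : ι → ℝ → E} {t : ℝ}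
    (hc : ∀ i, HasDerivAt (c i) (c' i t) t) (hv : ∀ i, HasDerivAt (v i) (v' i t) t) :
    HasDerivAt (lincomb c v) (lincomb c' v t + lincomb c v' t) t := by
  refine (HasDerivAt.fun_sum fun i (_ : i ∈ Finset.univ) => (hc i).smul (hv i)).congr_deriv ?_
  simp only [lincomb, ← Finset.sum_add_distrib, add_comm]

theorem lincomb_eq_zero_iff {c : ι → ℝ → ℝ} {v : ι → ℝ → E} {t : ℝ}
    (hv : LinearIndependent ℝ fun i => v i t) : lincomb c v t = 0 ↔ ∀ i, c i t = 0 :=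
  ⟨Fintype.linearIndependent_iff.1 hv _, fun hc => by simp [lincomb, hc]⟩

theorem inner_lincomb_comm {v w : ι → ℝ → E} {t : ℝ} (c d : ι → ℝ → ℝ)
    (hvw : ∀ i j, ⟪w i t, v j t⟫ = ⟪v i t, w j t⟫) :
    ⟪lincomb c v t, lincomb d w t⟫ = ⟪lincomb c w t, lincomb d v t⟫ := by
  simp only [lincomb, sum_inner, inner_sum, real_inner_smul_left, real_inner_smul_right, hvw]

theorem memLp_lincomb {c : ι → ℝ → ℝ} {v : ι → ℝ → E} {a b : ℝ} {p : ENNReal}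
    (hc : ∀ i, MemLp (c i) p (volume.restrict (Ioc a b)))
    (hv : ∀ i, ContinuousOn (v i) (Icc a b)) :
    MemLp (lincomb c v) p (volume.restrict (Ioc a b)) :=
  memLp_finsetSum _ fun i _ => (hv i).memLp_top_restrict_Ioc.smul (hc i)

/-- The cross term `⟨∑ fⁱ Jᵢ, ∑ fⁱ' Jᵢ'⟩` of the derivative is turned into `⟨∑ fⁱ Jᵢ', ∑ fⁱ' Jᵢ⟩`
by the symmetry `hlag`; it then combines with the other terms into `⟨X', X'⟩ - ‖Y‖²`. -/
theorem hasDerivAt_inner_lincomb_of_jacobi {A : E →L[ℝ] E} {f f' : ι → ℝ → ℝ}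
    {J J' : ι → ℝ → E} {t : ℝ} (hf : ∀ i, HasDerivAt (f i) (f' i t) t)
    (hJ : ∀ i, HasDerivAt (J i) (J' i t) t) (hJ' : ∀ i, HasDerivAt (J' i) (-A (J i t)) t)
    (hlag : ∀ i j, ⟪J' i t, J j t⟫ = ⟪J i t, J' j t⟫) :
    HasDerivAt (fun s => ⟪lincomb f J s, lincomb f J' s⟫)
      (⟪lincomb f' J t + lincomb f J' t, lincomb f' J t + lincomb f J' t⟫
        - ⟪A (lincomb f J t), lincomb f J t⟫ - ‖lincomb f' J t‖ ^ 2) t := by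
  have hZ := hasDerivAt_lincomb (v' := fun i s => -A (J i s)) hf hJ'
  have hAX : lincomb f (fun i s => -A (J i s)) t = -A (lincomb f J t) := by
    simp [lincomb, Finset.sum_neg_distrib]
  refine ((hasDerivAt_lincomb hf hJ).inner ℝ hZ).congr_deriv ?_
  rw [hAX, inner_add_right, inner_lincomb_comm f f' hlag, inner_neg_right,
    real_inner_comm (lincomb f J t), ← real_inner_self_eq_norm_sq]
  simp only [inner_add_left, inner_add_right, real_inner_comm (lincomb f J' t)]
  ring

theorem integral_inner_sub_eq_integral_norm_sq_add_of_jacobi {R : ℝ → E →L[ℝ] E}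
    {J J' : ι → ℝ → E} {f f' : ι → ℝ → ℝ} {a b : ℝ} {T : Set ℝ} (hab : a ≤ b)
    (hT : T.Countable) (hRcont : ContinuousOn R (Icc a b))
    (hJ : ∀ i, ∀ t ∈ Icc a b, HasDerivWithinAt (J i) (J' i t) (Icc a b) t)
    (hJ' : ∀ i, ∀ t ∈ Icc a b, HasDerivWithinAt (J' i) (-R t (J i t)) (Icc a b) t)
    (hlag : ∀ t ∈ Icc a b, ∀ i j, ⟪J' i t, J j t⟫ = ⟪J i t, J' j t⟫)
    (hfcont : ∀ i, ContinuousOn (f i) (Icc a b))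
    (hfderiv : ∀ i, ∀ t ∈ Ioo a b \ T, HasDerivAt (f i) (f' i t) t)
    (hf' : ∀ i, MemLp (f' i) 2 (volume.restrict (Ioc a b))) :
    ∫ t in a..b, (⟪lincomb f' J t + lincomb f J' t, lincomb f' J t + lincomb f J' t⟫
        - ⟪R t (lincomb f J t), lincomb f J t⟫) =
      (∫ t in a..b, ‖lincomb f' J t‖ ^ 2)
        + (⟪lincomb f J b, lincomb f J' b⟫ - ⟪lincomb f J a, lincomb f J' a⟫) := by
  have hJc i : ContinuousOn (J i) (Icc a b) := fun t ht => (hJ i t ht).continuousWithinAt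
  have hJ'c i : ContinuousOn (J' i) (Icc a b) := fun t ht => (hJ' i t ht).continuousWithinAt
  have hXc : ContinuousOn (lincomb f J) (Icc a b) := .lincomb hfcont hJc
  have hZc : ContinuousOn (lincomb f J') (Icc a b) := .lincomb hfcont hJ'c
  have hY : MemLp (lincomb f' J) 2 (volume.restrict (Ioc a b)) := memLp_lincomb hf' hJc
  have hX' : MemLp (lincomb f' J + lincomb f J') 2 (volume.restrict (Ioc a b)) :=
    hY.add (hZc.memLp_top_restrict_Ioc.mono_exponent le_top)
  have hYi : IntervalIntegrable (fun t => ‖lincomb f' J t‖ ^ 2) volume a b :=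
    hY.intervalIntegrable_norm_sq hab
  have hX'i : IntervalIntegrable (fun t => ⟪lincomb f' J t + lincomb f J' t,
      lincomb f' J t + lincomb f J' t⟫) volume a b := by
    simp only [real_inner_self_eq_norm_sq]
    exact hX'.intervalIntegrable_norm_sq hab
  have hRXi : IntervalIntegrable (fun t => ⟪R t (lincomb f J t), lincomb f J t⟫) volume a b :=
    ((hRcont.clm_apply hXc).inner hXc).intervalIntegrable_of_Icc hab
  have hFTC := integral_eq_of_hasDerivAt_off_countable_of_le _ _ hab hT (hXc.inner hZc)
    (fun t ht => hasDerivAt_inner_lincomb_of_jacobi (fun i => hfderiv i t ht)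
      (fun i => (hJ i t (Ioo_subset_Icc_self ht.1)).hasDerivAt (Icc_mem_nhds ht.1.1 ht.1.2))
      (fun i => (hJ' i t (Ioo_subset_Icc_self ht.1)).hasDerivAt (Icc_mem_nhds ht.1.1 ht.1.2))
      (hlag t (Ioo_subset_Icc_self ht.1))) ((hX'i.sub hRXi).sub hYi)
  rw [intervalIntegral.integral_sub (hX'i.sub hRXi) hYi] at hFTC
  linarith

theorem norm_sq_lincomb_ae_eq_zero_iff {v : ι → ℝ → E} {f f' : ι → ℝ → ℝ} {a b : ℝ} {T : Set ℝ}
    (hab : a < b) (hT : T.Countable) (hv : ∀ t ∈ Ioc a b, LinearIndependent ℝ fun i => v i t)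
    (hfcont : ∀ i, ContinuousOn (f i) (Icc a b))
    (hfderiv : ∀ i, ∀ t ∈ Ioo a b \ T, HasDerivAt (f i) (f' i t) t) (hfb : ∀ i, f i b = 0) :
    (fun t => ‖lincomb f' v t‖ ^ 2) =ᵐ[volume.restrict (Ioc a b)] 0 ↔
      ∀ t ∈ Icc a b, lincomb f v t = 0 := by
  have hvanish i : f' i =ᵐ[volume.restrict (Ioc a b)] 0 ↔ ∀ t ∈ Icc a b, f i t = 0 := by
    simpa only [hfb] using ae_eq_zero_iff_forall_eq_right_of_hasDerivAt hT (hfcont i) (hfderiv i)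
  calc (fun t => ‖lincomb f' v t‖ ^ 2) =ᵐ[volume.restrict (Ioc a b)] 0
      ↔ ∀ᵐ t ∂volume.restrict (Ioc a b), ∀ i, f' i t = 0 := by
        refine eventually_congr ((ae_restrict_mem measurableSet_Ioc).mono fun t ht => ?_)
        simp [lincomb_eq_zero_iff (hv t ht)]
    _ ↔ ∀ i, ∀ t ∈ Icc a b, f i t = 0 := ae_all_iff.trans (forall_congr' hvanish)
    _ ↔ ∀ t ∈ Icc a b, lincomb f v t = 0 := by
      refine ⟨fun h0 t ht => by simp [lincomb, h0 _ t ht], fun h0 i => ?_⟩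
      have hIoc : EqOn (f i) 0 (Ioc a b) := fun t ht =>
        (lincomb_eq_zero_iff (hv t ht)).1 (h0 t (Ioc_subset_Icc_self ht)) i
      exact hIoc.of_subset_closure (hfcont i) continuousOn_const Ioc_subset_Icc_self
        (closure_Ioc hab.ne).ge

end Jacobi

namespace TransverseJacobi

variable {n : ℕ} {a : ℝ} {R : ℝ → EuclideanSpace ℝ (Fin n) →L[ℝ] EuclideanSpace ℝ (Fin n)}
  {V₀ : Submodule ℝ (EuclideanSpace ℝ (Fin n))}
  {h : EuclideanSpace ℝ (Fin n) →ₗ[ℝ] EuclideanSpace ℝ (Fin n) →ₗ[ℝ] ℝ}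

theorem continuousOn (J : TransverseJacobi n a R V₀ h) : ContinuousOn J.J (Icc 0 a) :=
  fun t ht => (J.hasDeriv t ht).continuousWithinAt

theorem inner_deriv_comm
    (hRsym : ∀ t ∈ Icc 0 a, ∀ x y : EuclideanSpace ℝ (Fin n), ⟪R t x, y⟫ = ⟪x, R t y⟫)
    (hsym : ∀ x ∈ V₀, ∀ y ∈ V₀, h x y = h y x) (J₁ J₂ : TransverseJacobi n a R V₀ h) {t : ℝ}
    (ht : t ∈ Icc 0 a) : ⟪J₁.J' t, J₂.J t⟫ = ⟪J₁.J t, J₂.J' t⟫ := by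
  have hW := inner_deriv_sub_inner_deriv_eq_of_jacobi hRsym J₁.hasDeriv J₁.hasDeriv'
    J₂.hasDeriv J₂.hasDeriv' t ht
  have h0 : ⟪J₁.J' 0, J₂.J 0⟫ = ⟪J₁.J 0, J₂.J' 0⟫ := by
    rw [J₁.init_deriv _ J₂.init_mem, real_inner_comm, J₂.init_deriv _ J₁.init_mem,
      hsym _ J₁.init_mem _ J₂.init_mem]
  linarith

theorem inner_lincomb_deriv_at_zero {ι : Type*} [Fintype ι]
    (J : ι → TransverseJacobi n a R V₀ h) (c : ι → ℝ → ℝ) :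
    ⟪lincomb c (fun i => (J i).J) 0, lincomb c (fun i => (J i).J') 0⟫ =
      -h (lincomb c (fun i => (J i).J) 0) (lincomb c (fun i => (J i).J) 0) := by
  set x := lincomb c (fun i => (J i).J) 0
  have hx : x ∈ V₀ := V₀.sum_mem fun i _ => V₀.smul_mem _ (J i).init_mem
  calc ⟪x, lincomb c (fun i => (J i).J') 0⟫ = ∑ i, c i 0 * -h ((J i).J 0) x := by
        simp only [lincomb, inner_sum, real_inner_smul_right]
        exact Finset.sum_congr rfl fun i _ => by rw [real_inner_comm, (J i).init_deriv x hx]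
    _ = -h x x := by
        rw [show h x = ∑ i, c i 0 • h ((J i).J 0) by simp only [x, lincomb, map_sum, map_smul]]
        simp [Finset.sum_neg_distrib]

end TransverseJacobi

theorem indexForm_lincomb_eq_integral_norm_sq {n : ℕ} {a : ℝ} (ha : 0 ≤ a)
    {R : ℝ → EuclideanSpace ℝ (Fin n) →L[ℝ] EuclideanSpace ℝ (Fin n)}
    (hRcont : ContinuousOn R (Icc 0 a))
    (hRsym : ∀ t ∈ Icc 0 a, ∀ x y : EuclideanSpace ℝ (Fin n), ⟪R t x, y⟫ = ⟪x, R t y⟫)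
    {V₀ : Submodule ℝ (EuclideanSpace ℝ (Fin n))}
    {h : EuclideanSpace ℝ (Fin n) →ₗ[ℝ] EuclideanSpace ℝ (Fin n) →ₗ[ℝ] ℝ}
    (hsym : ∀ x ∈ V₀, ∀ y ∈ V₀, h x y = h y x) {ι : Type*} [Fintype ι]
    (J : ι → TransverseJacobi n a R V₀ h) {f f' : ι → ℝ → ℝ} {T : Set ℝ} (hT : T.Countable)
    (hfcont : ∀ i, ContinuousOn (f i) (Icc 0 a))
    (hfderiv : ∀ i, ∀ t ∈ Ioo 0 a \ T, HasDerivAt (f i) (f' i t) t)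
    (hf' : ∀ i, MemLp (f' i) 2 (volume.restrict (Ioc 0 a))) (hfa : ∀ i, f i a = 0) :
    indexForm n a R h (lincomb f fun i => (J i).J)
        (lincomb f' (fun i => (J i).J) + lincomb f fun i => (J i).J')
        (lincomb f fun i => (J i).J)
        (lincomb f' (fun i => (J i).J) + lincomb f fun i => (J i).J') =
      ∫ t in (0 : ℝ)..a, ‖lincomb f' (fun i => (J i).J) t‖ ^ 2 := by
  have hXa : lincomb f (fun i => (J i).J) a = 0 := by simp [lincomb, hfa]
  rw [indexForm]
  simp only [Pi.add_apply]
  rw [integral_inner_sub_eq_integral_norm_sq_add_of_jacobi ha hT hRcont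
    (fun i => (J i).hasDeriv) (fun i => (J i).hasDeriv')
    (fun t ht i j => (J i).inner_deriv_comm hRsym hsym (J j) ht) hfcont hfderiv hf',
    hXa, inner_zero_left, TransverseJacobi.inner_lincomb_deriv_at_zero]
  ring

/-- Paper's Lemma 3.5: if `J₁, …, J_n` are transverse Jacobi solutions whose values are linearly
independent for every `t ∈ (0, a]` (no focal points), and `X = ∑ᵢ fⁱ Jᵢ` with `fⁱ` piecewise
smooth and `fⁱ(a) = 0`, then `I(X, X) ≥ 0`, with equality iff `X` vanishes identically. -/
theorem index_nonneg_of_no_focal_points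
    {n : ℕ} {a : ℝ} (ha : 0 < a)
    (R : ℝ → EuclideanSpace ℝ (Fin n) →L[ℝ] EuclideanSpace ℝ (Fin n))
    (hRcont : ContinuousOn R (Set.Icc 0 a))
    (hRsym : ∀ t ∈ Set.Icc 0 a, ∀ x y : EuclideanSpace ℝ (Fin n), ⟪R t x, y⟫ = ⟪x, R t y⟫)
    (V₀ : Submodule ℝ (EuclideanSpace ℝ (Fin n)))
    (h : EuclideanSpace ℝ (Fin n) →ₗ[ℝ] EuclideanSpace ℝ (Fin n) →ₗ[ℝ] ℝ)
    (hsym : ∀ x ∈ V₀, ∀ y ∈ V₀, h x y = h y x)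
    (J : Fin n → TransverseJacobi n a R V₀ h)
    (hindep : ∀ t ∈ Set.Ioc 0 a, LinearIndependent ℝ (fun i => (J i).J t))
    (f f' : Fin n → ℝ → ℝ) (T : Finset ℝ)
    (hfcont : ∀ i, ContinuousOn (f i) (Set.Icc 0 a))
    (hfderiv : ∀ i, ∀ t ∈ Set.Icc 0 a \ (T : Set ℝ),
      HasDerivWithinAt (f i) (f' i t) (Set.Icc 0 a) t)
    (hfint : ∀ i, IntervalIntegrable (fun t => (f' i t) ^ 2) volume 0 a)
    (hfa : ∀ i, f i a = 0)
    (X X' : ℝ → EuclideanSpace ℝ (Fin n))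
    (hX : ∀ t, X t = ∑ i, f i t • (J i).J t)
    (hX' : ∀ t, X' t = ∑ i, (f' i t • (J i).J t + f i t • (J i).J' t)) :
    0 ≤ indexForm n a R h X X' X X' ∧
      (indexForm n a R h X X' X X' = 0 ↔ ∀ t ∈ Set.Icc 0 a, X t = 0) := by
  have hfderiv' i : ∀ t ∈ Ioo 0 a \ (T : Set ℝ), HasDerivAt (f i) (f' i t) t := fun t ht =>
    (hfderiv i t ⟨Ioo_subset_Icc_self ht.1, ht.2⟩).hasDerivAt (Icc_mem_nhds ht.1.1 ht.1.2)
  have hf' i : MemLp (f' i) 2 (volume.restrict (Ioc 0 a)) :=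
    (memLp_two_iff_integrable_sq
      (aestronglyMeasurable_of_hasDerivAt_off_countable T.countable_toSet (hfderiv' i))).2
      ((intervalIntegrable_iff_integrableOn_Ioc_of_le ha.le).1 (hfint i))
  have hYi := (memLp_lincomb hf' fun i => (J i).continuousOn).intervalIntegrable_norm_sq ha.le
  obtain rfl : X = lincomb f fun i => (J i).J := funext hX
  obtain rfl : X' = lincomb f' (fun i => (J i).J) + lincomb f fun i => (J i).J' :=
    funext fun t => by simp [hX', lincomb, Finset.sum_add_distrib]
  rw [indexForm_lincomb_eq_integral_norm_sq ha.le hRcont hRsym hsym J T.countable_toSet hfcont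
    hfderiv' hf' hfa, intervalIntegral.integral_eq_zero_iff_of_le_of_nonneg_ae ha.le
    (ae_of_all _ fun _ => sq_nonneg _) hYi,
    norm_sq_lincomb_ae_eq_zero_iff ha T.countable_toSet hindep hfcont hfderiv' hfa]
  exact ⟨intervalIntegral.integral_nonneg ha.le fun _ _ => sq_nonneg _, Iff.rfl⟩
end

section
/- Suppose some nontrivial transverse Jacobi solution vanishes at a point t₀ with 0 < t₀ < a. Then there exists a piecewise-C¹ curve U : [0,a] → ℝ^n with U(0) ∈ V₀ and U(a) = 0 such that I(U,U) < 0. -/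
open scoped RealInnerProductSpace
open MeasureTheory

/-!
Cut the Jacobi field off at its zero: `U₁ = J` on `[0, t₀]` and `U₁ = 0` afterwards. Integrating by
parts against the Jacobi equation, the transversality condition `⟨J'(0), ·⟩ = -h(J(0), ·)` makes
`I(U₁, U₁) = 0`, and `I(U₁, W) = ⟨J'(t₀), W(t₀)⟩` for every `W` with `W(0) = 0`. By uniqueness
for the Jacobi equation `J'(t₀) ≠ 0`, so a bump `W` with `W(t₀) = -J'(t₀)` and `W(a) = 0` gives
`I(U₁ + εW, U₁ + εW) = -2ε‖J'(t₀)‖² + ε² I(W, W) < 0` for small `ε > 0`.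
-/

open Set

theorem eqOn_zero_of_jacobi {E : Type*} [NormedAddCommGroup E] [NormedSpace ℝ E]
    {a b t₀ : ℝ} {R : ℝ → E →L[ℝ] E} {J J' : ℝ → E} (hR : ContinuousOn R (Icc a b))
    (hJ : ∀ t ∈ Icc a b, HasDerivWithinAt J (J' t) (Icc a b) t)
    (hJ' : ∀ t ∈ Icc a b, HasDerivWithinAt J' (-R t (J t)) (Icc a b) t)
    (ht₀ : t₀ ∈ Ioo a b) (h0 : J t₀ = 0) (h0' : J' t₀ = 0) : EqOn J 0 (Icc a b) := by
  obtain ⟨C, hC⟩ := isCompact_Icc.exists_bound_of_continuousOn hR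
  have hLip : ∀ t ∈ Ioo a b, LipschitzOnWith (max 1 C.toNNReal)
      (fun p : E × E ↦ (p.2, -R t p.1)) univ := by
    intro t ht
    have hRt : LipschitzWith C.toNNReal (R t) := (R t).lipschitz.weaken <| by
      rw [← norm_toNNReal]
      exact Real.toNNReal_le_toNNReal (hC t (Ioo_subset_Icc_self ht))
    have hLt := LipschitzWith.prod_snd.prodMk
      (hRt.comp (LipschitzWith.prod_fst (α := E) (β := E))).neg
    rw [mul_one] at hLt
    exact hLt.lipschitzOnWith
  have hderiv : ∀ t ∈ Ioo a b, HasDerivAt (fun t ↦ (J t, J' t)) (J' t, -R t (J t)) t :=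
    fun t ht ↦ ((hJ t (Ioo_subset_Icc_self ht)).hasDerivAt (Icc_mem_nhds ht.1 ht.2)).prodMk
      ((hJ' t (Ioo_subset_Icc_self ht)).hasDerivAt (Icc_mem_nhds ht.1 ht.2))
  have hsol : EqOn (fun t ↦ (J t, J' t)) 0 (Icc a b) :=
    ODE_solution_unique_of_mem_Icc hLip ht₀
      (fun t ht ↦ (hJ t ht).continuousWithinAt.prodMk (hJ' t ht).continuousWithinAt) hderiv
      (fun _ _ ↦ mem_univ _) continuousOn_const
      (fun t _ ↦ (hasDerivAt_const t (0 : E × E)).congr_deriv (by simp [Prod.zero_eq_mk]))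
      (fun _ _ ↦ mem_univ _) (by simp [h0, h0'])
  exact fun t ht ↦ congrArg Prod.fst (hsol ht)

theorem integral_inner_deriv_sub_inner_of_jacobi {E : Type*} [NormedAddCommGroup E]
    [InnerProductSpace ℝ E] {a b t₁ : ℝ} {R : ℝ → E →L[ℝ] E} {J J' W W' : ℝ → E}
    (hR : ContinuousOn R (Icc a b))
    (hJ : ∀ t ∈ Icc a b, HasDerivWithinAt J (J' t) (Icc a b) t)
    (hJ' : ∀ t ∈ Icc a b, HasDerivWithinAt J' (-R t (J t)) (Icc a b) t)
    (hW : ∀ t ∈ Icc a b, HasDerivWithinAt W (W' t) (Icc a b) t) (hW' : ContinuousOn W' (Icc a b))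
    (ht₁ : t₁ ∈ Icc a b) :
    ∫ t in a..t₁, (⟪J' t, W' t⟫ - ⟪R t (J t), W t⟫) = ⟪J' t₁, W t₁⟫ - ⟪J' a, W a⟫ := by
  have hsub : Icc a t₁ ⊆ Icc a b := Icc_subset_Icc_right ht₁.2
  have hJc : ContinuousOn J (Icc a b) := fun t ht ↦ (hJ t ht).continuousWithinAt
  have hJ'c : ContinuousOn J' (Icc a b) := fun t ht ↦ (hJ' t ht).continuousWithinAt
  have hWc : ContinuousOn W (Icc a b) := fun t ht ↦ (hW t ht).continuousWithinAt
  refine intervalIntegral.integral_eq_sub_of_hasDerivAt_of_le ht₁.1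
    ((hJ'c.inner (𝕜 := ℝ) hWc).mono hsub) (fun t ht ↦ ?_) ?_
  · have hmem : Icc a b ∈ nhds t := Icc_mem_nhds ht.1 (ht.2.trans_le ht₁.2)
    have htI : t ∈ Icc a b := hsub (Ioo_subset_Icc_self ht)
    exact (((hJ' t htI).hasDerivAt hmem).inner ℝ ((hW t htI).hasDerivAt hmem)).congr_deriv
      (by rw [inner_neg_left, sub_eq_add_neg])
  · exact (((hJ'c.inner hW').sub ((hR.clm_apply hJc).inner hWc)).mono
      hsub).intervalIntegrable_of_Icc ht₁.1

theorem inner_add_smul_sub_inner_apply_add_smul {E : Type*} [NormedAddCommGroup E]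
    [InnerProductSpace ℝ E] {T : E →ₗ[ℝ] E} (hT : T.IsSymmetric) (x x' w w' : E) (ε : ℝ) :
    ⟪x' + ε • w', x' + ε • w'⟫ - ⟪T (x + ε • w), x + ε • w⟫ =
      (⟪x', x'⟫ - ⟪T x, x⟫) + 2 * ε * (⟪x', w'⟫ - ⟪T x, w⟫) + ε ^ 2 * (⟪w', w'⟫ - ⟪T w, w⟫) := by
  have hTwx : ⟪T w, x⟫ = ⟪T x, w⟫ := by rw [hT, real_inner_comm]
  simp only [map_add, map_smul, inner_add_left, inner_add_right, real_inner_smul_left,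
    real_inner_smul_right, hTwx, real_inner_comm x' w']
  ring

theorem inner_indicator_add_smul_sub_inner_apply {E : Type*} [NormedAddCommGroup E]
    [InnerProductSpace ℝ E] {R : ℝ → E →L[ℝ] E} {t : ℝ} (hR : (R t : E →ₗ[ℝ] E).IsSymmetric)
    (J J' W W' : ℝ → E) (t₀ ε : ℝ) :
    ⟪((Iic t₀).indicator J' + ε • W') t, ((Iic t₀).indicator J' + ε • W') t⟫ -
        ⟪R t (((Iic t₀).indicator J + ε • W) t), ((Iic t₀).indicator J + ε • W) t⟫ =
      (Iic t₀).indicator (fun s ↦ ⟪J' s, J' s⟫ - ⟪R s (J s), J s⟫ +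
          2 * ε * (⟪J' s, W' s⟫ - ⟪R s (J s), W s⟫)) t +
        ε ^ 2 * (⟪W' t, W' t⟫ - ⟪R t (W t), W t⟫) := by
  have key := inner_add_smul_sub_inner_apply_add_smul hR
  simp only [ContinuousLinearMap.coe_coe] at key
  by_cases ht : t ≤ t₀
  · simp only [Pi.add_apply, Pi.smul_apply, indicator_of_mem (mem_Iic.2 ht)]
    exact key _ _ _ _ _
  · simp only [Pi.add_apply, Pi.smul_apply, indicator_of_notMem (notMem_Iic.2 (not_le.1 ht))]
    simpa using key 0 0 (W t) (W' t) ε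

theorem HasDerivWithinAt.indicator_Iic {E : Type*} [NormedAddCommGroup E] [NormedSpace ℝ E]
    {f f' : ℝ → E} {s : Set ℝ} {t t₀ : ℝ} (hf : HasDerivWithinAt f (f' t) s t) (ht : t ≠ t₀) :
    HasDerivWithinAt ((Iic t₀).indicator f) ((Iic t₀).indicator f' t) s t := by
  rcases ht.lt_or_gt with ht | ht
  · rw [indicator_of_mem (mem_Iic.2 ht.le)]
    exact hf.congr_of_eventuallyEq
      (eventually_nhdsWithin_of_eventually_nhds <| Filter.eventually_of_mem (Iio_mem_nhds ht)
        fun x hx ↦ indicator_of_mem (mem_Iic.2 (le_of_lt hx)) f)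
      (indicator_of_mem (mem_Iic.2 ht.le) f)
  · have hnot : t ∉ Iic t₀ := notMem_Iic.2 ht
    rw [indicator_of_notMem hnot]
    exact (hasDerivWithinAt_const t s 0).congr_of_eventuallyEq
      (eventually_nhdsWithin_of_eventually_nhds <| Filter.eventually_of_mem (Ioi_mem_nhds ht)
        fun x hx ↦ indicator_of_notMem (notMem_Iic.2 hx) f) (indicator_of_notMem hnot f)

theorem ContinuousOn.indicator_Iic {α E : Type*} [TopologicalSpace α] [LinearOrder α]
    [OrderClosedTopology α] [TopologicalSpace E] [Zero E] {f : α → E} {s : Set α} {t₀ : α}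
    (hf : ContinuousOn f s) (h0 : f t₀ = 0) : ContinuousOn ((Iic t₀).indicator f) s := by
  classical
  rw [← piecewise_eq_indicator]
  refine ContinuousOn.piecewise (fun x hx ↦ ?_) (hf.mono inter_subset_left) continuousOn_const
  obtain rfl : x = t₀ := frontier_Iic_subset t₀ hx.2
  exact h0

theorem IntervalIntegrable.indicator {E : Type*} [NormedAddCommGroup E] {f : ℝ → E} {a b : ℝ}
    {μ : Measure ℝ} (hf : IntervalIntegrable f μ a b) {s : Set ℝ} (hs : MeasurableSet s) :
    IntervalIntegrable (s.indicator f) μ a b :=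
  ⟨hf.1.indicator hs, hf.2.indicator hs⟩

theorem intervalIntegrable_comp_indicator_Iic_add {E F : Type*} [NormedAddCommGroup E]
    [NormedAddCommGroup F] {Φ : E → F} (hΦ : Continuous Φ) {f g : ℝ → E} {a b t₀ : ℝ}
    (hab : a ≤ b) (hf : ContinuousOn f (Icc a b)) (hg : ContinuousOn g (Icc a b)) :
    IntervalIntegrable (fun t ↦ Φ (((Iic t₀).indicator f + g) t)) volume a b := by
  have hsplit : (fun t ↦ Φ (((Iic t₀).indicator f + g) t)) =
      (Iic t₀).indicator (fun t ↦ Φ (f t + g t)) + (Iic t₀)ᶜ.indicator (fun t ↦ Φ (g t)) := by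
    ext t
    by_cases ht : t ∈ Iic t₀
    · simp only [Pi.add_apply, indicator_of_mem ht, indicator_of_notMem (notMem_compl_iff.2 ht),
        add_zero]
    · simp only [Pi.add_apply, indicator_of_notMem ht, indicator_of_mem (mem_compl ht), zero_add]
  rw [hsplit]
  exact (((hΦ.comp_continuousOn (hf.add hg)).intervalIntegrable_of_Icc hab).indicator
    measurableSet_Iic).add
    (((hΦ.comp_continuousOn hg).intervalIntegrable_of_Icc hab).indicator measurableSet_Iic.compl)

theorem exists_quadratic_bump {E : Type*} [NormedAddCommGroup E]
    [NormedSpace ℝ E] {a t₀ : ℝ} (h0 : t₀ ≠ 0) (ha : t₀ ≠ a) (w : E) :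
    ∃ W W' : ℝ → E, (∀ t, HasDerivAt W (W' t) t) ∧ Continuous W' ∧
      W 0 = 0 ∧ W a = 0 ∧ W t₀ = w := by
  have hc : t₀ * (a - t₀) ≠ 0 := mul_ne_zero h0 (sub_ne_zero.2 ha.symm)
  refine ⟨fun t ↦ (t * (a - t) / (t₀ * (a - t₀))) • w,
    fun t ↦ ((a - 2 * t) / (t₀ * (a - t₀))) • w, fun t ↦ ?_, by fun_prop, by simp, by simp,
    by simp [div_self hc]⟩
  have hφ : HasDerivAt (fun s ↦ s * (a - s)) (a - 2 * t) t :=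
    ((hasDerivAt_id' t).mul ((hasDerivAt_const t a).sub (hasDerivAt_id' t))).congr_deriv
      (by simp only [Pi.sub_apply]; ring)
  exact (hφ.div_const _).smul_const w

theorem exists_pos_sq_mul_lt_mul {c : ℝ} (hc : 0 < c) (C : ℝ) : ∃ ε > 0, ε ^ 2 * C < ε * c := by
  have hC : 0 < |C| + 1 := by positivity
  refine ⟨c / (|C| + 1), by positivity, ?_⟩
  have hεC : c / (|C| + 1) * (|C| + 1) = c := div_mul_cancel₀ c hC.ne'
  have hε : 0 < c / (|C| + 1) := by positivity
  nlinarith [le_abs_self C, mul_pos hε hε]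

theorem TransverseJacobi.continuousOn_J {n : ℕ} {a : ℝ}
    {R : ℝ → EuclideanSpace ℝ (Fin n) →L[ℝ] EuclideanSpace ℝ (Fin n)}
    {V₀ : Submodule ℝ (EuclideanSpace ℝ (Fin n))}
    {h : EuclideanSpace ℝ (Fin n) →ₗ[ℝ] EuclideanSpace ℝ (Fin n) →ₗ[ℝ] ℝ}
    (K : TransverseJacobi n a R V₀ h) : ContinuousOn K.J (Icc 0 a) :=
  fun t ht ↦ (K.hasDeriv t ht).continuousWithinAt

theorem TransverseJacobi.continuousOn_J' {n : ℕ} {a : ℝ}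
    {R : ℝ → EuclideanSpace ℝ (Fin n) →L[ℝ] EuclideanSpace ℝ (Fin n)}
    {V₀ : Submodule ℝ (EuclideanSpace ℝ (Fin n))}
    {h : EuclideanSpace ℝ (Fin n) →ₗ[ℝ] EuclideanSpace ℝ (Fin n) →ₗ[ℝ] ℝ}
    (K : TransverseJacobi n a R V₀ h) : ContinuousOn K.J' (Icc 0 a) :=
  fun t ht ↦ (K.hasDeriv' t ht).continuousWithinAt

theorem indexForm_indicator_add_smul {n : ℕ} {a t₀ ε : ℝ}
    {R : ℝ → EuclideanSpace ℝ (Fin n) →L[ℝ] EuclideanSpace ℝ (Fin n)}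
    (hRcont : ContinuousOn R (Icc 0 a))
    (hRsym : ∀ t ∈ Icc 0 a, ∀ x y : EuclideanSpace ℝ (Fin n), ⟪R t x, y⟫ = ⟪x, R t y⟫)
    {V₀ : Submodule ℝ (EuclideanSpace ℝ (Fin n))}
    {h : EuclideanSpace ℝ (Fin n) →ₗ[ℝ] EuclideanSpace ℝ (Fin n) →ₗ[ℝ] ℝ}
    (K : TransverseJacobi n a R V₀ h) (ht₀ : t₀ ∈ Icc 0 a) (hKt₀ : K.J t₀ = 0)
    {W W' : ℝ → EuclideanSpace ℝ (Fin n)}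
    (hW : ∀ t ∈ Icc 0 a, HasDerivWithinAt W (W' t) (Icc 0 a) t) (hW' : ContinuousOn W' (Icc 0 a))
    (hW0 : W 0 = 0) :
    indexForm n a R h ((Iic t₀).indicator K.J + ε • W) ((Iic t₀).indicator K.J' + ε • W')
        ((Iic t₀).indicator K.J + ε • W) ((Iic t₀).indicator K.J' + ε • W') =
      2 * ε * ⟪K.J' t₀, W t₀⟫ + ε ^ 2 * indexForm n a R h W W' W W' := by
  have hWc : ContinuousOn W (Icc 0 a) := fun t ht ↦ (hW t ht).continuousWithinAt
  have hIcc : uIcc 0 a = Icc 0 a := uIcc_of_le (ht₀.1.trans ht₀.2)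
  set U := (Iic t₀).indicator K.J + ε • W
  set U' := (Iic t₀).indicator K.J' + ε • W'
  set p := fun t ↦ ⟪K.J' t, K.J' t⟫ - ⟪R t (K.J t), K.J t⟫ +
    2 * ε * (⟪K.J' t, W' t⟫ - ⟪R t (K.J t), W t⟫)
  set q := fun t ↦ ⟪W' t, W' t⟫ - ⟪R t (W t), W t⟫
  have hc₁ : ContinuousOn (fun t ↦ ⟪K.J' t, K.J' t⟫ - ⟪R t (K.J t), K.J t⟫) (Icc 0 a) :=
    (K.continuousOn_J'.inner K.continuousOn_J').sub
      ((hRcont.clm_apply K.continuousOn_J).inner K.continuousOn_J)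
  have hc₂ : ContinuousOn (fun t ↦ ⟪K.J' t, W' t⟫ - ⟪R t (K.J t), W t⟫) (Icc 0 a) :=
    (K.continuousOn_J'.inner hW').sub ((hRcont.clm_apply K.continuousOn_J).inner hWc)
  have hp : ∫ t in 0..t₀, p t = h (K.J 0) (K.J 0) + 2 * ε * ⟪K.J' t₀, W t₀⟫ := by
    have hsub : Icc 0 t₀ ⊆ Icc 0 a := Icc_subset_Icc_right ht₀.2
    rw [intervalIntegral.integral_add ((hc₁.mono hsub).intervalIntegrable_of_Icc ht₀.1)
      (((hc₂.mono hsub).intervalIntegrable_of_Icc ht₀.1).const_mul _),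
      intervalIntegral.integral_const_mul,
      integral_inner_deriv_sub_inner_of_jacobi hRcont K.hasDeriv K.hasDeriv' K.hasDeriv
        K.continuousOn_J' ht₀,
      integral_inner_deriv_sub_inner_of_jacobi hRcont K.hasDeriv K.hasDeriv' hW hW' ht₀,
      hKt₀, hW0, K.init_deriv _ K.init_mem]
    simp
  have hpt : EqOn (fun t ↦ ⟪U' t, U' t⟫ - ⟪R t (U t), U t⟫)
      (fun t ↦ (Iic t₀).indicator p t + ε ^ 2 * q t) (uIcc 0 a) := fun t ht ↦
    inner_indicator_add_smul_sub_inner_apply (hRsym t (hIcc ▸ ht)) K.J K.J' W W' t₀ ε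
  have hpint : IntervalIntegrable p volume 0 a :=
    (hc₁.add (continuousOn_const.mul hc₂)).intervalIntegrable_of_Icc (ht₀.1.trans ht₀.2)
  have hqint : IntervalIntegrable q volume 0 a :=
    ((hW'.inner hW').sub ((hRcont.clm_apply hWc).inner hWc)).intervalIntegrable_of_Icc
      (ht₀.1.trans ht₀.2)
  have hind := intervalIntegral.integral_indicator (f := p) (μ := volume) ht₀
  rw [Iic_def] at hind
  unfold indexForm
  rw [intervalIntegral.integral_congr hpt,
    intervalIntegral.integral_add (hpint.indicator measurableSet_Iic) (hqint.const_mul _), hind,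
    intervalIntegral.integral_const_mul, hp]
  simp only [U, Pi.add_apply, Pi.smul_apply, indicator_of_mem (mem_Iic.2 ht₀.1), hW0,
    smul_zero, add_zero, map_zero, neg_zero, zero_add]
  ring

theorem index_neg_past_focal_point_general
    {n : ℕ} {a : ℝ}
    (R : ℝ → EuclideanSpace ℝ (Fin n) →L[ℝ] EuclideanSpace ℝ (Fin n))
    (hRcont : ContinuousOn R (Set.Icc 0 a))
    (hRsym : ∀ t ∈ Set.Icc 0 a, ∀ x y : EuclideanSpace ℝ (Fin n), ⟪R t x, y⟫ = ⟪x, R t y⟫)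
    (V₀ : Submodule ℝ (EuclideanSpace ℝ (Fin n)))
    (h : EuclideanSpace ℝ (Fin n) →ₗ[ℝ] EuclideanSpace ℝ (Fin n) →ₗ[ℝ] ℝ)
    (K : TransverseJacobi n a R V₀ h)
    (hK_nontrivial : ∃ s ∈ Set.Icc 0 a, K.J s ≠ 0)
    (t₀ : ℝ) (ht₀ : t₀ ∈ Set.Ioo 0 a) (hKt₀ : K.J t₀ = 0) :
    ∃ (U U' : ℝ → EuclideanSpace ℝ (Fin n)) (T : Finset ℝ),
      ContinuousOn U (Set.Icc 0 a) ∧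
      (∀ t ∈ Set.Icc 0 a \ (T : Set ℝ), HasDerivWithinAt U (U' t) (Set.Icc 0 a) t) ∧
      IntervalIntegrable (fun t => ‖U' t‖ ^ 2) volume 0 a ∧
      U 0 ∈ V₀ ∧ U a = 0 ∧
      indexForm n a R h U U' U U' < 0 := by
  have hJ' : K.J' t₀ ≠ 0 := fun hJ' ↦ by
    obtain ⟨s, hs, hJs⟩ := hK_nontrivial
    exact hJs (eqOn_zero_of_jacobi hRcont K.hasDeriv K.hasDeriv' ht₀ hKt₀ hJ' hs)
  obtain ⟨W, W', hW, hW', hW0, hWa, hWt₀⟩ :=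
    exists_quadratic_bump ht₀.1.ne' ht₀.2.ne (-K.J' t₀)
  obtain ⟨ε, hε, hεW⟩ := exists_pos_sq_mul_lt_mul (by positivity : 0 < 2 * ‖K.J' t₀‖ ^ 2)
    (indexForm n a R h W W' W W')
  refine ⟨(Iic t₀).indicator K.J + ε • W, (Iic t₀).indicator K.J' + ε • W', {t₀},
    (K.continuousOn_J.indicator_Iic hKt₀).add
      (fun t _ ↦ ((hW t).continuousAt.const_smul ε).continuousWithinAt),
    fun t ht ↦ ((K.hasDeriv t ht.1).indicator_Iic (by simpa using ht.2)).add
      ((hW t).hasDerivWithinAt.const_smul ε),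
    ?_, by simpa [indicator_of_mem (mem_Iic.2 ht₀.1.le), hW0] using K.init_mem,
    by simp [indicator_of_notMem (notMem_Iic.2 ht₀.2), hWa], ?_⟩
  · exact intervalIntegrable_comp_indicator_Iic_add (continuous_norm.pow 2) (ht₀.1.trans ht₀.2).le
      K.continuousOn_J' (hW'.const_smul ε).continuousOn
  · rw [indexForm_indicator_add_smul hRcont hRsym K (Ioo_subset_Icc_self ht₀) hKt₀
      (fun t _ ↦ (hW t).hasDerivWithinAt) hW'.continuousOn hW0, hWt₀, inner_neg_right,
      real_inner_self_eq_norm_sq]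
    linarith

/-- Paper's Theorem 3.7: if some nontrivial transverse Jacobi solution vanishes at a point
`t₀ ∈ (0, a)`, then there is a piecewise-`C¹` curve `U` with `U(0) ∈ V₀` and `U(a) = 0`
such that `I(U, U) < 0`. -/
theorem index_neg_past_focal_point
    {n : ℕ} {a : ℝ} (ha : 0 < a)
    (R : ℝ → EuclideanSpace ℝ (Fin n) →L[ℝ] EuclideanSpace ℝ (Fin n))
    (hRcont : ContinuousOn R (Set.Icc 0 a))
    (hRsym : ∀ t ∈ Set.Icc 0 a, ∀ x y : EuclideanSpace ℝ (Fin n), ⟪R t x, y⟫ = ⟪x, R t y⟫)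
    (V₀ : Submodule ℝ (EuclideanSpace ℝ (Fin n)))
    (h : EuclideanSpace ℝ (Fin n) →ₗ[ℝ] EuclideanSpace ℝ (Fin n) →ₗ[ℝ] ℝ)
    (hsym : ∀ x ∈ V₀, ∀ y ∈ V₀, h x y = h y x)
    (K : TransverseJacobi n a R V₀ h)
    (hK_nontrivial : ∃ s ∈ Set.Icc 0 a, K.J s ≠ 0)
    (t₀ : ℝ) (ht₀ : t₀ ∈ Set.Ioo 0 a) (hKt₀ : K.J t₀ = 0) :
    ∃ (U U' : ℝ → EuclideanSpace ℝ (Fin n)) (T : Finset ℝ),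
      ContinuousOn U (Set.Icc 0 a) ∧
      (∀ t ∈ Set.Icc 0 a \ (T : Set ℝ), HasDerivWithinAt U (U' t) (Set.Icc 0 a) t) ∧
      IntervalIntegrable (fun t => ‖U' t‖ ^ 2) volume 0 a ∧
      U 0 ∈ V₀ ∧ U a = 0 ∧
      indexForm n a R h U U' U U' < 0 :=
  index_neg_past_focal_point_general R hRcont hRsym V₀ h K hK_nontrivial t₀ ht₀ hKt₀
end

section
/- Let V₀ ⊆ ℝ^{m-1} be a k-dimensional subspace (1 ≤ k ≤ m−1), S a symmetric endomorphism of V₀ with eigenvalues λ₁, …, λ_k (with multiplicity), and C : V₀ → V₀^⊥ any linear map. Let δ ∈ ℝ and let A_δ : ℝ → End(ℝ^{m-1}) be the solution of A''(t) + δ·A(t) = 0 with A(0) the orthogonal projection onto V₀, A'(0)v = −Sv + Cv for v ∈ V₀, and A'(0)w = w for w ∈ V₀^⊥. Then for all t, det A_δ(t) = 𝔰_δ(t)^{m−k−1} · ∏_{α=1}^{k} (𝔰'_δ(t) − λ_α·𝔰_δ(t)). -/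
open scoped RealInnerProductSpace

/-!
Solutions of `A'' = -δ A` are determined by `A 0` and `A' 0`, so
`A t = 𝔰'_δ(t) A 0 + 𝔰_δ(t) A' 0`. This map is `𝔰_δ(t)` on the invariant subspace `V₀ᗮ`, and
on `V₀` it is `𝔰'_δ(t) - 𝔰_δ(t) S` modulo `V₀ᗮ`; the determinant is the product of the
determinants of these two pieces, and the second is diagonal in the eigenbasis of `S`.
-/

theorem eq_smul_add_smul_of_hasDerivAt {X : Type*} [NormedAddCommGroup X] [NormedSpace ℝ X]
    {δ : ℝ} {s s' : ℝ → ℝ} (hs : ∀ t, HasDerivAt s (s' t) t)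
    (hs' : ∀ t, HasDerivAt s' (-δ * s t) t) (hs0 : s 0 = 0) (hs'0 : s' 0 = 1)
    {g g' : ℝ → X} (hg : ∀ t, HasDerivAt g (g' t) t)
    (hg' : ∀ t, HasDerivAt g' (-δ • g t) t)
    (t : ℝ) : g t = s' t • g 0 + s t • g' 0 := by
  let L : X × X →L[ℝ] X × X :=
    (ContinuousLinearMap.snd ℝ X X).prod (-δ • ContinuousLinearMap.fst ℝ X X)
  let u : ℝ → X × X := fun t => (s' t • g 0 + s t • g' 0, (-δ * s t) • g 0 + s' t • g' 0)
  have hu : ∀ t, HasDerivAt u (L (u t)) t := fun t => by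
    refine (((hs' t).smul_const _).add ((hs t).smul_const _)).prodMk
      ((((hs t).const_mul (-δ)).smul_const _).add ((hs' t).smul_const _)) |>.congr_deriv ?_
    ext <;> simp [u, L, smul_smul]
  have key := ODE_solution_unique_univ (v := fun _ => L) (s := fun _ => Set.univ) (t₀ := 0)
    (fun _ => L.lipschitz.lipschitzOnWith)
    (fun t => ⟨(hg t).prodMk (hg' t), trivial⟩) (fun t => ⟨hu t, trivial⟩)
    (by simp [u, hs0, hs'0])
  exact congrArg Prod.fst (congrFun key t)

theorem LinearMap.det_eq_prod_of_apply_basis {ι R M : Type*} [Fintype ι] [DecidableEq ι]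
    [CommRing R] [AddCommGroup M] [Module R M] (b : Module.Basis ι R M) {f : M →ₗ[R] M}
    {μ : ι → R} (hf : ∀ i, f (b i) = μ i • b i) : f.det = ∏ i, μ i := by
  have : LinearMap.toMatrix b b f = Matrix.diagonal μ := by
    ext i j
    rcases eq_or_ne i j with rfl | hij
    · simp [LinearMap.toMatrix_apply, hf]
    · simp [LinearMap.toMatrix_apply, hf, hij, Finsupp.single_eq_of_ne hij]
  rw [← LinearMap.det_toMatrix b, this, Matrix.det_diagonal]

theorem LinearMap.det_eq_det_mul_pow_of_isCompl {K E : Type*} [Field K] [AddCommGroup E]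
    [Module K E] [FiniteDimensional K E] {V W : Submodule K E} (h : IsCompl V W)
    {f : E →ₗ[K] E} {g : V →ₗ[K] V} {c : K} (hW : ∀ w ∈ W, f w = c • w)
    (hV : ∀ v : V, f v - g v ∈ W) : f.det = g.det * c ^ Module.finrank K W := by
  have hfW : W ≤ W.comap f := fun w hw => by simpa [hW w hw] using W.smul_mem c hw
  have hrestrict : f.restrict hfW = c • LinearMap.id := by
    ext w
    simp [LinearMap.restrict_apply, hW w w.2]
  let e := W.quotientEquivOfIsCompl V h.symm
  have hquot : (e : E ⧸ W →ₗ[K] V) ∘ₗ W.mapQ W f hfW ∘ₗ (e.symm : V →ₗ[K] _) = g := by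
    ext v
    have hmk : (Submodule.Quotient.mk (f v) : E ⧸ W) = Submodule.Quotient.mk ((g v : V) : E) :=
      (Submodule.Quotient.eq W).mpr (hV v)
    simp only [e, LinearMap.comp_apply, LinearEquiv.coe_coe,
      Submodule.quotientEquivOfIsCompl_symm_apply,
      Submodule.mapQ_apply, hmk, Submodule.quotientEquivOfIsCompl_apply_mk_right]
  rw [f.det_eq_det_mul_det W hfW, hrestrict, ← hquot, LinearMap.det_conj, LinearMap.det_smul,
    LinearMap.det_id, mul_one, mul_comm]

theorem det_constant_curvature_comparison_general
    (m k : ℕ) (δ : ℝ)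
    (V₀ : Submodule ℝ (EuclideanSpace ℝ (Fin (m - 1))))
    (hV₀ : Module.finrank ℝ V₀ = k)
    (S : V₀ →ₗ[ℝ] V₀)
    (lam : Fin k → ℝ) (b : Module.Basis (Fin k) ℝ V₀)
    (hb : ∀ i, S (b i) = lam i • b i)
    (C : V₀ →ₗ[ℝ] ↥V₀ᗮ)
    (A A' : ℝ → EuclideanSpace ℝ (Fin (m - 1)) →L[ℝ] EuclideanSpace ℝ (Fin (m - 1)))
    (hA : ∀ t, HasDerivAt A (A' t) t)
    (hA' : ∀ t, HasDerivAt A' (-δ • A t) t)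
    (hA0 : A 0 = V₀.subtypeL.comp (V₀.orthogonalProjectionOnto))
    (hA'0V : ∀ v : V₀, A' 0 (v : EuclideanSpace ℝ (Fin (m - 1))) =
      -(↑(S v) : EuclideanSpace ℝ (Fin (m - 1))) + (↑(C v) : EuclideanSpace ℝ (Fin (m - 1))))
    (hA'0perp : ∀ w ∈ V₀ᗮ, A' 0 w = w)
    (s s' : ℝ → ℝ)
    (hs : ∀ t, HasDerivAt s (s' t) t)
    (hs' : ∀ t, HasDerivAt s' (-δ * s t) t)
    (hs0 : s 0 = 0) (hs'0 : s' 0 = 1) :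
    ∀ t : ℝ, LinearMap.det (A t).toLinearMap =
      (s t) ^ (m - k - 1) * ∏ i : Fin k, (s' t - lam i * s t) := by
  intro t
  have hAt : A t = s' t • A 0 + s t • A' 0 :=
    eq_smul_add_smul_of_hasDerivAt hs hs' hs0 hs'0 hA hA' t
  have hperp : ∀ w ∈ V₀ᗮ, A t w = s t • w := fun w hw => by
    simp [hAt, hA0, hA'0perp w hw, Submodule.orthogonalProjectionOnto_apply_of_mem_orthogonal hw]
  let D : V₀ →ₗ[ℝ] V₀ := s' t • LinearMap.id - s t • S
  have hV : ∀ v : V₀, A t v - D v ∈ V₀ᗮ := fun v => by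
    have : A t v - D v = ↑(s t • C v) := by simp [D, hAt, hA0, hA'0V v]
    rw [this]
    exact (s t • C v).2
  have hfinrank : Module.finrank ℝ V₀ᗮ = m - k - 1 := by
    have := V₀.finrank_add_finrank_orthogonal
    rw [hV₀, finrank_euclideanSpace_fin] at this
    omega
  have hdiag : D.det = ∏ i : Fin k, (s' t - lam i * s t) :=
    LinearMap.det_eq_prod_of_apply_basis b fun i => by
      simp [D, hb]
      module
  rw [LinearMap.det_eq_det_mul_pow_of_isCompl V₀.isCompl_orthogonal hperp hV, hdiag, hfinrank,
    mul_comm]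

/-- Explicit determinant of the constant-curvature comparison solution `A_δ` (from the proof of
the paper's Theorem 4.8): `det A_δ(t) = 𝔰_δ(t)^{m−k−1} ∏_α (𝔰'_δ(t) − λ_α 𝔰_δ(t))`, where the
`λ_α` are the eigenvalues (with multiplicity) of the symmetric endomorphism `S` of the
`k`-dimensional subspace `V₀`. -/
theorem det_constant_curvature_comparison
    (m k : ℕ) (hm : 2 ≤ m) (hk1 : 1 ≤ k) (hk2 : k ≤ m - 1) (δ : ℝ)
    (V₀ : Submodule ℝ (EuclideanSpace ℝ (Fin (m - 1))))
    (hV₀ : Module.finrank ℝ V₀ = k)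
    (S : V₀ →ₗ[ℝ] V₀)
    (hSsym : ∀ v w : V₀, ⟪S v, w⟫ = ⟪v, S w⟫)
    (lam : Fin k → ℝ) (b : Module.Basis (Fin k) ℝ V₀)
    (hb : ∀ i, S (b i) = lam i • b i)
    (C : V₀ →ₗ[ℝ] ↥V₀ᗮ)
    (A A' : ℝ → EuclideanSpace ℝ (Fin (m - 1)) →L[ℝ] EuclideanSpace ℝ (Fin (m - 1)))
    (hA : ∀ t, HasDerivAt A (A' t) t)
    (hA' : ∀ t, HasDerivAt A' (-δ • A t) t)
    (hA0 : A 0 = V₀.subtypeL.comp (V₀.orthogonalProjectionOnto))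
    (hA'0V : ∀ v : V₀, A' 0 (v : EuclideanSpace ℝ (Fin (m - 1))) =
      -(↑(S v) : EuclideanSpace ℝ (Fin (m - 1))) + (↑(C v) : EuclideanSpace ℝ (Fin (m - 1))))
    (hA'0perp : ∀ w ∈ V₀ᗮ, A' 0 w = w)
    (s s' : ℝ → ℝ)
    (hs : ∀ t, HasDerivAt s (s' t) t)
    (hs' : ∀ t, HasDerivAt s' (-δ * s t) t)
    (hs0 : s 0 = 0) (hs'0 : s' 0 = 1) :
    ∀ t : ℝ, LinearMap.det (A t).toLinearMap =
      (s t) ^ (m - k - 1) * ∏ i : Fin k, (s' t - lam i * s t) :=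
  det_constant_curvature_comparison_general m k δ V₀ hV₀ S lam b hb C A A' hA hA' hA0 hA'0V hA'0perp
    s s' hs hs' hs0 hs'0
end

section
/- Let (V, ⟨·,·⟩) be a real inner product space of dimension at least 2, β a continuous linear functional on V with operator norm ‖β‖ < 1, and fix v ∈ V with v ≠ 0. Then the set C_v := { n ∈ V : ⟨v,n⟩ + ‖n‖·β(v) = 0 } is a linear subspace of V if and only if β(v) = 0 (in which case C_v is the orthogonal complement of v). -/
open scoped RealInnerProductSpace

/-!
If `β v ≠ 0`, the cone `C_v` still contains a nonzero vector `n`: in dimension at least `2`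
pick a unit vector `u ⟂ v` and take `n = ‖v‖ √(‖v‖² - β(v)²) u - β(v) v`, which works because
`|β v| < ‖v‖`. Then `-n ∉ C_v`, since adding the two defining equations would give
`2 ‖n‖ β(v) = 0`; so `C_v` is not closed under negation.
-/

section

variable {V : Type*} [NormedAddCommGroup V] [InnerProductSpace ℝ V]

/-- The cone `C_v` of vectors normal to `v` for the Randers norm `‖·‖ + β`. -/
def randersNormalCone (β : V →L[ℝ] ℝ) (v : V) : Set V := {n | ⟪v, n⟫ + ‖n‖ * β v = 0}

theorem randersNormalCone_eq_orthogonal_of_apply_eq_zero {β : V →L[ℝ] ℝ} {v : V} (hβv : β v = 0) :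
    randersNormalCone β v = (ℝ ∙ v)ᗮ := by
  ext n
  simp [randersNormalCone, Submodule.mem_orthogonal_singleton_iff_inner_right, hβv]

theorem apply_eq_zero_of_neg_mem_randersNormalCone {β : V →L[ℝ] ℝ} {v n : V}
    (hn : n ∈ randersNormalCone β v) (hneg : -n ∈ randersNormalCone β v) (hn0 : n ≠ 0) :
    β v = 0 := by
  simp only [randersNormalCone, Set.mem_ofPred_eq, inner_neg_right, norm_neg] at hn hneg
  have hprod : ‖n‖ * β v = 0 := by linarith
  exact (mul_eq_zero.mp hprod).resolve_left (norm_ne_zero_iff.mpr hn0)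

theorem exists_norm_eq_one_inner_eq_zero (hdim : 2 ≤ Module.rank ℝ V) (v : V) :
    ∃ u : V, ‖u‖ = 1 ∧ ⟪v, u⟫ = 0 := by
  have hspan : (ℝ ∙ v) ≠ ⊤ := fun h => by
    have hle : Module.rank ℝ (ℝ ∙ v) ≤ 1 := (rank_span_le {v}).trans (by simp)
    rw [h, rank_top] at hle
    exact absurd (hdim.trans hle) (by norm_num)
  obtain ⟨u, hu, hu0⟩ := (Submodule.ne_bot_iff _).mp
    (mt Submodule.orthogonal_eq_bot_iff.mp hspan)
  refine ⟨‖u‖⁻¹ • u, norm_smul_inv_norm hu0, ?_⟩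
  rw [inner_smul_right, Submodule.mem_orthogonal_singleton_iff_inner_right.mp hu, mul_zero]

theorem exists_mem_randersNormalCone_norm_eq_sq (hdim : 2 ≤ Module.rank ℝ V)
    {β : V →L[ℝ] ℝ} {v : V} (hβv : |β v| ≤ ‖v‖) :
    ∃ n ∈ randersNormalCone β v, ‖n‖ = ‖v‖ ^ 2 := by
  obtain ⟨u, hu, hvu⟩ := exists_norm_eq_one_inner_eq_zero hdim v
  set t := √(‖v‖ ^ 2 - β v ^ 2)
  have ht : t ^ 2 = ‖v‖ ^ 2 - β v ^ 2 :=
    Real.sq_sqrt (sub_nonneg.mpr (sq_le_sq' (abs_le.mp hβv).1 (abs_le.mp hβv).2))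
  have horth : ⟪(‖v‖ * t) • u, β v • v⟫ = 0 := by
    rw [real_inner_smul_left, real_inner_smul_right, real_inner_comm, hvu, mul_zero, mul_zero]
  have hnorm : ‖(‖v‖ * t) • u - β v • v‖ = ‖v‖ ^ 2 := by
    rw [← sq_eq_sq₀ (norm_nonneg _) (by positivity), sq,
      norm_sub_sq_eq_norm_sq_add_norm_sq_real horth]
    simp only [norm_smul, hu, Real.norm_eq_abs, abs_mul, abs_norm]
    linear_combination ‖v‖ ^ 2 * (ht + sq_abs t + sq_abs (β v))
  refine ⟨_, ?_, hnorm⟩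
  show ⟪v, _⟫ + _ * _ = 0
  rw [hnorm, inner_sub_right, real_inner_smul_right, real_inner_smul_right, hvu,
    real_inner_self_eq_norm_sq]
  ring

theorem ContinuousLinearMap.abs_apply_lt_norm_of_norm_lt_one {β : V →L[ℝ] ℝ} (hβ : ‖β‖ < 1)
    {v : V} (hv : v ≠ 0) : |β v| < ‖v‖ :=
  calc |β v| ≤ ‖β‖ * ‖v‖ := β.le_opNorm v
    _ < 1 * ‖v‖ := mul_lt_mul_of_pos_right hβ (norm_pos_iff.mpr hv)
    _ = ‖v‖ := one_mul _

end

theorem randers_normal_cone_subspace_iff_general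
    (V : Type*) [NormedAddCommGroup V] [InnerProductSpace ℝ V]
    (hdim : 2 ≤ Module.rank ℝ V)
    (β : V →L[ℝ] ℝ) (hβ : ‖β‖ < 1) (v : V) :
    ((∃ W : Submodule ℝ V, (W : Set V) = {n : V | ⟪v, n⟫ + ‖n‖ * β v = 0}) ↔ β v = 0) ∧
      (β v = 0 → {n : V | ⟪v, n⟫ + ‖n‖ * β v = 0} = ((ℝ ∙ v)ᗮ : Submodule ℝ V)) := by
  have horth := @randersNormalCone_eq_orthogonal_of_apply_eq_zero V _ _ β v
  refine ⟨⟨fun ⟨W, hW⟩ => ?_, fun hβv => ⟨_, (horth hβv).symm⟩⟩, horth⟩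
  change (W : Set V) = randersNormalCone β v at hW
  by_contra hβv
  have hv : v ≠ 0 := fun h => hβv (h ▸ map_zero β)
  obtain ⟨n, hn, hnorm⟩ := exists_mem_randersNormalCone_norm_eq_sq hdim
    (β.abs_apply_lt_norm_of_norm_lt_one hβ hv).le
  have hn0 : n ≠ 0 := norm_ne_zero_iff.mp (hnorm ▸ pow_ne_zero 2 (norm_ne_zero_iff.mpr hv))
  have hneg : -n ∈ randersNormalCone β v := by
    rw [← hW] at hn ⊢
    exact W.neg_mem hn
  exact hβv (apply_eq_zero_of_neg_mem_randersNormalCone hn hneg hn0)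

/-- The paper's Example 3.1: in a real inner product space of dimension at least `2`, for a
continuous linear functional `β` with `‖β‖ < 1` and `v ≠ 0`, the normal cone
`C_v := {n : ⟨v, n⟩ + ‖n‖ β(v) = 0}` of the Randers norm `‖·‖ + β` is a linear subspace
iff `β(v) = 0`, in which case it is the orthogonal complement of `v`. -/
theorem randers_normal_cone_subspace_iff
    (V : Type*) [NormedAddCommGroup V] [InnerProductSpace ℝ V]
    (hdim : 2 ≤ Module.rank ℝ V)
    (β : V →L[ℝ] ℝ) (hβ : ‖β‖ < 1) (v : V) (hv : v ≠ 0) :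
    ((∃ W : Submodule ℝ V, (W : Set V) = {n : V | ⟪v, n⟫ + ‖n‖ * β v = 0}) ↔ β v = 0) ∧
      (β v = 0 → {n : V | ⟪v, n⟫ + ‖n‖ * β v = 0} = ((ℝ ∙ v)ᗮ : Submodule ℝ V)) :=
  randers_normal_cone_subspace_iff_general V hdim β hβ v
end
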